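/- Let m ≥ 3 and π = γ_{m,m+1} ∈ Π(m+1,m). The set of hereditary (m+1)-stable (m+1)-patterns 𝒫 with 𝒫_π = A¹_{m,m} is exactly {A¹_{m,m+1}, A¹_{m+1,m+1}, A¹_{m-1,m+1} ∪ {(m+1)⃗}} ∪ {D^{m+1}_{1,l} : 3 ≤ l ≤ m+1}. -/

import Mathlib

/-!
Stability at level `m + 1` says that merging any two points `i < j` of `P` gives `A¹_{m,m}`.
Merging is injective on sets avoiding `i` and `j`, so `P` contains every set through `1` with at
most `m - 1` points, consists of sets through `1`, and, unless the full set lies in `P`, contains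
every cosingleton `(m+1)⃗ ∖ {d}`. If the full set lies in `P`, unique preimages in the lift to
`m + 2` make the holes `d` of the cosingletons in `P` upward closed, i.e. an interval `[l, m + 1]`,
and `P = D^{m+1}_{1,l}` (`l = 2` and `l = m + 2` being the two remaining `A¹` cases).

Conversely, each candidate extends to a family `F n`, `n ≥ m + 1` (for `D^{m+1}_{1,l}` it is
`D^n_{n-m, l+n-m-1}`), closed under merging two points. A naturally ordered partition into fewer
blocks factors through successive merges, so the projections of `F n` are `F k` for `k > m`,
while every projection to `k ≤ m` points is `A¹_{k,k}`.
-/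

open Finset

/-- `vec m` is the set `{1, …, m}`. -/
def vec (m : ℕ) : Finset ℕ := Finset.Icc 1 m

/-- `IsNOP s k C` : `C 1, …, C k` form a naturally ordered partition of `{1, …, s}`
into `k` nonempty sets. -/
def IsNOP (s k : ℕ) (C : ℕ → Finset ℕ) : Prop :=
  (∀ i ∈ Finset.Icc 1 k, (C i).Nonempty) ∧
  (∀ i ∈ Finset.Icc 1 k, ∀ j ∈ Finset.Icc 1 k, i ≠ j → Disjoint (C i) (C j)) ∧
  (Finset.Icc 1 k).biUnion C = Finset.Icc 1 s ∧
  (∀ i ∈ Finset.Icc 1 k, ∀ j ∈ Finset.Icc 1 k, i < j → (C i).min < (C j).min)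

/-- The induced subset `P_γ`. -/
def indSet (C : ℕ → Finset ℕ) (k : ℕ) (P : Finset ℕ) : Finset ℕ :=
  (Finset.Icc 1 k).filter fun j => ((C j) ∩ P).Nonempty

/-- The induced pattern `𝒫_γ`. -/
def indPat (C : ℕ → Finset ℕ) (k : ℕ) (P : Set (Finset ℕ)) : Set (Finset ℕ) :=
  indSet C k '' P

/-- An `m`-pattern: a nonempty collection of nonempty subsets of `{1, …, m}`. -/
def IsPattern (m : ℕ) (P : Set (Finset ℕ)) : Prop :=
  P.Nonempty ∧ ∀ Q ∈ P, Finset.Nonempty Q ∧ Q ⊆ vec m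

/-- `k`-stability of an `m`-pattern. -/
def IsStable (m k : ℕ) (P : Set (Finset ℕ)) : Prop :=
  ∀ k', 2 ≤ k' → k' ≤ k → ∀ α β : ℕ → Finset ℕ,
    IsNOP m k' α → IsNOP m k' β → indPat α k' P = indPat β k' P

/-- `φ_m = {{1},{1,2},…,{1,…,m}}`. -/
def phiPat (m : ℕ) : Set (Finset ℕ) :=
  { S | ∃ l, 1 ≤ l ∧ l ≤ m ∧ S = Finset.Icc 1 l }

/-- `A_{j,m}`: nonempty subsets of `{1,…,m}` of cardinality at most `j`. -/
def APat (j m : ℕ) : Set (Finset ℕ) :=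
  { S | S.Nonempty ∧ S ⊆ vec m ∧ S.card ≤ j }

/-- `A¹_{j,m}`: subsets of `{1,…,m}` of cardinality at most `j` containing `1`. -/
def A1Pat (j m : ℕ) : Set (Finset ℕ) :=
  { S | 1 ∈ S ∧ S ⊆ vec m ∧ S.card ≤ j }

/-- `H^m_{h,l}`: complements in `{1,…,m}` of a set of `h` holes, all lying in `[l,m]`. -/
def HPat (m h l : ℕ) : Set (Finset ℕ) :=
  { S | ∃ D : Finset ℕ, D.card = h ∧ D ⊆ Finset.Icc l m ∧ S = vec m \ D }

/-- `EH^m_{h,l}`: complements in `{1,…,m}` of a set of `h` holes, all in `[l,m]`,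
whose first hole equals `l`. -/
def EHPat (m h l : ℕ) : Set (Finset ℕ) :=
  { S | ∃ D : Finset ℕ, D.card = h ∧ D ⊆ Finset.Icc l m ∧ l ∈ D ∧ S = vec m \ D }

/-- `D^m_{r,s} = A¹_{m-r-1,m} ∪ ⋃_{h=1}^{r} H^m_{h,s-h+1} ∪ {m⃗}`. -/
def DPat (m r s : ℕ) : Set (Finset ℕ) :=
  A1Pat (m - r - 1) m ∪ (⋃ h ∈ Finset.Icc 1 r, HPat m h (s - h + 1)) ∪ {vec m}

/-- `γ_{i,j} ∈ Π(m+1,m)` (for `1 ≤ i < j ≤ m+1`): the naturally ordered partition of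
`{1,…,m+1}` into `m` blocks, namely `{i,j}` together with the singletons of the
remaining points. -/
def gammaIJ (i j : ℕ) : ℕ → Finset ℕ :=
  fun t => if t = i then {i, j} else if t < j then {t} else {t + 1}

/-- A hereditary `m`-stable `m`-pattern. -/
def IsHSP (m : ℕ) (P : Set (Finset ℕ)) : Prop :=
  IsPattern m P ∧ IsStable m m P ∧
  ∀ m', m < m' → ∃ Q : Set (Finset ℕ), IsPattern m' Q ∧ IsStable m' m' Q ∧
    ∀ γ : ℕ → Finset ℕ, IsNOP m' m γ → indPat γ m Q = P

/-- Unique stable lifts. -/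
def HasUSL (m : ℕ) (P : Set (Finset ℕ)) : Prop :=
  ∀ m', m < m' → ∃! Q : Set (Finset ℕ),
    IsPattern m' Q ∧ IsStable m' m' Q ∧
    ∀ γ : ℕ → Finset ℕ, IsNOP m' m γ → indPat γ m Q = P

section Collapse

/-- Sends each point of `{1, …, n}` to the index of its block in `γ_{i,j}` (`mem_gammaIJ`). -/
def collapse (i j x : ℕ) : ℕ := if x = j then i else if x < j then x else x - 1

def skip (j u : ℕ) : ℕ := if u < j then u else u + 1

def collapsePat (i j : ℕ) (P : Set (Finset ℕ)) : Set (Finset ℕ) := Finset.image (collapse i j) '' P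

variable {i j n : ℕ}

lemma collapse_skip (u : ℕ) : collapse i j (skip j u) = u := by
  unfold collapse skip; split_ifs <;> omega

lemma skip_collapse {x : ℕ} (hxj : x ≠ j) : skip j (collapse i j x) = x := by
  unfold collapse skip; split_ifs <;> omega

lemma collapse_eq_left_iff (hij : i < j) {x : ℕ} : collapse i j x = i ↔ x = i ∨ x = j := by
  unfold collapse; split_ifs <;> omega

lemma collapse_of_lt {x : ℕ} (hx : x < j) : collapse i j x = x := by
  unfold collapse; split_ifs <;> omega

lemma collapse_right : collapse i j j = i := if_pos rfl

lemma skip_of_lt {u : ℕ} (hu : u < j) : skip j u = u := if_pos hu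

lemma skip_injective (j : ℕ) : Function.Injective (skip j) := by
  intro a b; unfold skip; split_ifs <;> omega

lemma skip_ne_right (u : ℕ) : skip j u ≠ j := by
  unfold skip; split_ifs <;> omega

lemma skip_eq_left_iff (hij : i < j) {u : ℕ} : skip j u = i ↔ u = i := by
  unfold skip; split_ifs <;> omega

lemma collapse_mem_vec_iff (hi : 1 ≤ i) (hij : i < j) (hj : j ≤ n) {x : ℕ} :
    collapse i j x ∈ vec (n - 1) ↔ x ∈ vec n := by
  simp only [vec, Finset.mem_Icc]; unfold collapse; split_ifs <;> omega

lemma skip_mem_vec_iff (hj0 : 0 < j) (hj : j ≤ n) {u : ℕ} : skip j u ∈ vec n ↔ u ∈ vec (n - 1) := by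
  simp only [vec, Finset.mem_Icc]; unfold skip; split_ifs <;> omega

lemma collapse_mem_Icc_pred {l d : ℕ} (hj : j ≤ n) (hd : d ∈ Icc l n) (hdj : d ≠ j) :
    collapse i j d ∈ Icc (l - 1) (n - 1) := by
  simp only [Finset.mem_Icc] at hd ⊢; unfold collapse; split_ifs <;> omega

lemma collapse_mem_Icc {l d : ℕ} (hlj : l ≤ j) (hj : j ≤ n) (hd : d ∈ Icc l n) (hdj : d ≠ j) :
    collapse i j d ∈ Icc l (n - 1) := by
  simp only [Finset.mem_Icc] at hd ⊢; unfold collapse; split_ifs <;> omega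

lemma collapse_lt_collapse {a b : ℕ} (hab : a < b) (ha : a ≠ j) (hb : b = j → a < i) :
    collapse i j a < collapse i j b := by
  unfold collapse; split_ifs <;> omega

lemma mem_image_collapse (hij : i < j) {S : Finset ℕ} {u : ℕ} :
    u ∈ S.image (collapse i j) ↔ (u = i ∧ (i ∈ S ∨ j ∈ S)) ∨ (u ≠ i ∧ skip j u ∈ S) := by
  simp only [Finset.mem_image]
  constructor
  · rintro ⟨x, hx, rfl⟩
    by_cases hxij : x = i ∨ x = j
    · refine .inl ⟨(collapse_eq_left_iff hij).2 hxij, ?_⟩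
      rcases hxij with rfl | rfl <;> simp [hx]
    · push Not at hxij
      refine .inr ⟨fun h => ?_, (skip_collapse hxij.2).symm ▸ hx⟩
      exact hxij.1 ((collapse_eq_left_iff hij).1 h |>.resolve_right hxij.2)
  · rintro (⟨rfl, hS | hS⟩ | ⟨-, hS⟩)
    · exact ⟨u, hS, collapse_of_lt hij⟩
    · exact ⟨j, hS, collapse_right⟩
    · exact ⟨skip j u, hS, collapse_skip u⟩

lemma mem_image_collapse_left (hij : i < j) {S : Finset ℕ} :
    i ∈ S.image (collapse i j) ↔ i ∈ S ∨ j ∈ S := by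
  simp [mem_image_collapse hij]

lemma mem_image_collapse_of_ne (hij : i < j) {S : Finset ℕ} {u : ℕ} (hu : u ≠ i) :
    u ∈ S.image (collapse i j) ↔ skip j u ∈ S := by
  simp [mem_image_collapse hij, hu]

lemma one_mem_image_collapse (hj : 1 < j) {S : Finset ℕ} (h1 : 1 ∈ S) :
    1 ∈ S.image (collapse i j) :=
  Finset.mem_image.2 ⟨1, h1, collapse_of_lt hj⟩

lemma image_collapse_subset_vec (hi : 1 ≤ i) (hij : i < j) (hj : j ≤ n) {S : Finset ℕ}
    (hS : S ⊆ vec n) : S.image (collapse i j) ⊆ vec (n - 1) := by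
  simp only [Finset.image_subset_iff]
  exact fun x hx => (collapse_mem_vec_iff hi hij hj).2 (hS hx)

lemma image_skip_subset_vec (hj0 : 0 < j) (hj : j ≤ n) {T : Finset ℕ} (hT : T ⊆ vec (n - 1)) :
    T.image (skip j) ⊆ vec n := by
  simp only [Finset.image_subset_iff]
  exact fun u hu => (skip_mem_vec_iff hj0 hj).2 (hT hu)

lemma image_collapse_image_skip (T : Finset ℕ) :
    (T.image (skip j)).image (collapse i j) = T := by
  rw [Finset.image_image, Function.comp_def]
  simp [collapse_skip]

lemma image_collapse_vec (hi : 1 ≤ i) (hij : i < j) (hj : j ≤ n) :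
    (vec n).image (collapse i j) = vec (n - 1) := by
  ext u
  by_cases hu : u = i
  · subst hu
    simp only [mem_image_collapse_left hij, vec, Finset.mem_Icc]
    omega
  · rw [mem_image_collapse_of_ne hij hu, skip_mem_vec_iff (by omega) hj]

lemma collapse_injOn {D : Finset ℕ} (hij : i < j) (hD : ¬ (i ∈ D ∧ j ∈ D)) :
    Set.InjOn (collapse i j) D := by
  intro x hx y hy hxy
  by_cases hxi : collapse i j x = i
  · have hyi := hxy ▸ hxi
    rw [collapse_eq_left_iff hij] at hxi hyi
    rcases hxi with rfl | rfl <;> rcases hyi with rfl | rfl <;> simp_all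
  · have hxj : x ≠ j := fun h => hxi (h ▸ collapse_right)
    have hyj : y ≠ j := fun h => hxi (hxy ▸ h ▸ collapse_right)
    rw [← skip_collapse hxj, hxy, skip_collapse hyj]

lemma image_collapse_sdiff_of_iff (hi : 1 ≤ i) (hij : i < j) (hj : j ≤ n) {D : Finset ℕ}
    (hD : i ∈ D ↔ j ∈ D) :
    (vec n \ D).image (collapse i j) = vec (n - 1) \ D.image (collapse i j) := by
  ext u
  by_cases hu : u = i
  · subst hu
    simp only [mem_image_collapse_left hij, Finset.mem_sdiff, vec, Finset.mem_Icc]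
    constructor
    · rintro (h | h) <;> exact ⟨by omega, by tauto⟩
    · exact fun h => .inl ⟨by omega, by tauto⟩
  · rw [mem_image_collapse_of_ne hij hu, Finset.mem_sdiff, Finset.mem_sdiff,
      mem_image_collapse_of_ne hij hu, skip_mem_vec_iff (by omega) hj]

lemma image_collapse_sdiff_of_xor (hi : 1 ≤ i) (hij : i < j) (hj : j ≤ n) {D : Finset ℕ}
    (hD : i ∈ D ↔ j ∉ D) :
    (vec n \ D).image (collapse i j) = vec (n - 1) \ (D.image (collapse i j)).erase i := by
  ext u
  by_cases hu : u = i
  · subst hu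
    simp only [mem_image_collapse_left hij, Finset.mem_sdiff, Finset.mem_erase, vec,
      Finset.mem_Icc]
    constructor
    · rintro (h | h) <;> exact ⟨by omega, by tauto⟩
    · intro
      by_cases hiD : u ∈ D
      · exact .inr ⟨by omega, hD.1 hiD⟩
      · exact .inl ⟨by omega, hiD⟩
  · rw [mem_image_collapse_of_ne hij hu, Finset.mem_sdiff, Finset.mem_sdiff, Finset.mem_erase,
      mem_image_collapse_of_ne hij hu, skip_mem_vec_iff (by omega) hj]
    tauto

lemma eq_of_image_collapse_eq (hij : i < j) {R S : Finset ℕ} (hiS : i ∉ S) (hjS : j ∉ S)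
    (h : R.image (collapse i j) = S.image (collapse i j)) : R = S := by
  have hR : i ∉ R ∧ j ∉ R := by
    have := mem_image_collapse_left hij (S := R)
    rw [h, mem_image_collapse_left hij] at this
    tauto
  ext x
  by_cases hx : x = i ∨ x = j
  · rcases hx with rfl | rfl <;> simp [hR, hiS, hjS]
  · push Not at hx
    have hcx : collapse i j x ≠ i := fun h' => by rw [collapse_eq_left_iff hij] at h'; tauto
    have := mem_image_collapse_of_ne hij hcx (S := R)
    rwa [h, mem_image_collapse_of_ne hij hcx, skip_collapse hx.2, Iff.comm] at this

end Collapse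

section Partitions

lemma singleton_inter_nonempty_iff {a : ℕ} {s : Finset ℕ} : ({a} ∩ s).Nonempty ↔ a ∈ s := by
  simp [Finset.Nonempty]

variable {n k : ℕ} {C : ℕ → Finset ℕ}

namespace IsNOP

lemma subset_Icc (h : IsNOP n k C) {t : ℕ} (ht : t ∈ Icc 1 k) : C t ⊆ Icc 1 n :=
  h.2.2.1 ▸ Finset.subset_biUnion_of_mem C ht

lemma exists_mem (h : IsNOP n k C) {x : ℕ} (hx : x ∈ Icc 1 n) : ∃ t ∈ Icc 1 k, x ∈ C t :=
  Finset.mem_biUnion.1 (h.2.2.1 ▸ hx)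

lemma eq_of_mem (h : IsNOP n k C) {s t x : ℕ} (hs : s ∈ Icc 1 k) (ht : t ∈ Icc 1 k)
    (hxs : x ∈ C s) (hxt : x ∈ C t) : s = t := by
  by_contra hst
  exact Finset.disjoint_left.1 (h.2.1 s hs t ht hst) hxs hxt

lemma one_le (h : IsNOP n k C) (hn : 1 ≤ n) : 1 ≤ k := by
  obtain ⟨t, ht, -⟩ := h.exists_mem (x := 1) (by simp [hn])
  simp only [Finset.mem_Icc] at ht
  omega

lemma le_of_mem (h : IsNOP n k C) {t x : ℕ} (ht : t ∈ Icc 1 k) (hx : x ∈ C t) : t ≤ x := by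
  induction t generalizing x with
  | zero => simp at ht
  | succ t ih =>
    rcases Nat.eq_zero_or_pos t with rfl | ht0
    · exact (Finset.mem_Icc.1 (h.subset_Icc ht hx)).1
    · have ht' : t ∈ Icc 1 k := by simp only [Finset.mem_Icc] at ht ⊢; omega
      have hmin : WithTop.some t ≤ (C t).min :=
        Finset.le_min fun a ha => WithTop.coe_le_coe.2 (ih ht' ha)
      have hlt : WithTop.some t < WithTop.some x :=
        hmin.trans_lt ((h.2.2.2 t ht' (t + 1) ht (by omega)).trans_le (Finset.min_le hx))
      exact WithTop.coe_lt_coe.1 hlt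

lemma one_mem (h : IsNOP n k C) (hk : 1 ≤ k) : 1 ∈ C 1 := by
  obtain ⟨y, hy⟩ := h.1 1 (by simp [hk])
  have hn := (Finset.mem_Icc.1 (h.subset_Icc (by simp [hk]) hy))
  obtain ⟨t, ht, h1⟩ := h.exists_mem (x := 1) (by simp; omega)
  obtain rfl : t = 1 := by have := h.le_of_mem ht h1; simp only [Finset.mem_Icc] at ht; omega
  exact h1

lemma exists_mem_add_le (h : IsNOP n k C) {t : ℕ} (ht : t ∈ Icc 1 k) :
    ∃ x ∈ C t, x + k ≤ n + t := by
  obtain ⟨d, hd⟩ : ∃ d, t + d = k := ⟨k - t, by simp only [Finset.mem_Icc] at ht; omega⟩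
  induction d generalizing t with
  | zero =>
    obtain ⟨x, hx⟩ := h.1 t ht
    exact ⟨x, hx, by have := h.subset_Icc ht hx; simp only [Finset.mem_Icc] at this; omega⟩
  | succ d ih =>
    have ht' : t + 1 ∈ Icc 1 k := by simp only [Finset.mem_Icc] at ht ⊢; omega
    obtain ⟨y, hy, hyk⟩ := ih ht' (by omega)
    have hne := h.1 t ht
    have hlt : WithTop.some ((C t).min' hne) < WithTop.some y := by
      rw [Finset.coe_min']
      exact (h.2.2.2 t ht (t + 1) ht' (by omega)).trans_le (Finset.min_le hy)
    exact ⟨_, Finset.min'_mem _ hne, by have := WithTop.coe_lt_coe.1 hlt; omega⟩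

lemma eq_singleton (h : IsNOP n n C) {t : ℕ} (ht : t ∈ Icc 1 n) : C t = {t} := by
  have hself : ∀ s ∈ Icc 1 n, s ∈ C s := fun s hs => by
    obtain ⟨x, hx, hxs⟩ := h.exists_mem_add_le hs
    obtain rfl : x = s := by have := h.le_of_mem hs hx; omega
    exact hx
  refine Finset.eq_singleton_iff_unique_mem.2 ⟨hself t ht, fun x hx => ?_⟩
  have hxn := h.subset_Icc ht hx
  exact (h.eq_of_mem ht hxn hx (hself x hxn)).symm

lemma exists_one_lt_card (h : IsNOP n k C) (hkn : k < n) : ∃ t ∈ Icc 1 k, 1 < (C t).card := by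
  by_contra! hle
  have := calc n = ((Icc 1 k).biUnion C).card := by rw [h.2.2.1]; simp
    _ ≤ ∑ t ∈ Icc 1 k, (C t).card := Finset.card_biUnion_le
    _ ≤ ∑ _t ∈ Icc 1 k, 1 := Finset.sum_le_sum hle
    _ = k := by simp
  omega

end IsNOP

lemma indPat_of_isNOP_self (h : IsNOP n n C) {P : Set (Finset ℕ)} (hP : ∀ S ∈ P, S ⊆ vec n) :
    indPat C n P = P := by
  have hS : ∀ S ∈ P, indSet C n S = S := fun S hS => by
    ext t
    simp only [indSet, Finset.mem_filter]
    constructor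
    · rintro ⟨ht, hne⟩
      rwa [h.eq_singleton ht, singleton_inter_nonempty_iff] at hne
    · intro ht
      have ht' : t ∈ Icc 1 n := hP S hS ht
      rw [h.eq_singleton ht', singleton_inter_nonempty_iff]
      exact ⟨ht', ht⟩
  rw [indPat, Set.image_congr hS, Set.image_id']

end Partitions

section Merging

variable {i j n k : ℕ}

lemma mem_gammaIJ (hij : i < j) {t x : ℕ} : x ∈ gammaIJ i j t ↔ collapse i j x = t := by
  unfold gammaIJ
  by_cases hti : t = i
  · subst hti
    simp [collapse_eq_left_iff hij, eq_comm]
  · rw [if_neg hti]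
    unfold collapse
    split_ifs <;> simp <;> omega

lemma min_gammaIJ (hij : i < j) (t : ℕ) : (gammaIJ i j t).min = WithTop.some (skip j t) := by
  unfold gammaIJ skip
  split_ifs with hti h
  · subst hti; simp [hij.le]
  · omega
  all_goals simp

lemma isNOP_gammaIJ (hi : 1 ≤ i) (hij : i < j) (hj : j ≤ n) : IsNOP n (n - 1) (gammaIJ i j) := by
  refine ⟨fun t _ => ⟨skip j t, (mem_gammaIJ hij).2 (collapse_skip t)⟩, ?_, ?_, ?_⟩
  · intro s _ t _ hst
    exact Finset.disjoint_left.2 fun x hs ht =>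
      hst (((mem_gammaIJ hij).1 hs).symm.trans ((mem_gammaIJ hij).1 ht))
  · ext x
    simp only [Finset.mem_biUnion, mem_gammaIJ hij, exists_eq_right']
    exact collapse_mem_vec_iff hi hij hj
  · intro s _ t _ hst
    rw [min_gammaIJ hij, min_gammaIJ hij, WithTop.coe_lt_coe]
    unfold skip; split_ifs <;> omega

lemma indSet_gammaIJ (hi : 1 ≤ i) (hij : i < j) (hj : j ≤ n) {S : Finset ℕ} (hS : S ⊆ vec n) :
    indSet (gammaIJ i j) (n - 1) S = S.image (collapse i j) := by
  ext u
  rw [indSet, Finset.mem_filter]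
  simp only [Finset.Nonempty, Finset.mem_inter, mem_gammaIJ hij, Finset.mem_image]
  constructor
  · rintro ⟨-, x, hx, hxS⟩
    exact ⟨x, hxS, hx⟩
  · rintro ⟨x, hxS, rfl⟩
    exact ⟨(collapse_mem_vec_iff hi hij hj).2 (hS hxS), x, rfl, hxS⟩

lemma indPat_gammaIJ (hi : 1 ≤ i) (hij : i < j) (hj : j ≤ n) {P : Set (Finset ℕ)}
    (hP : ∀ S ∈ P, S ⊆ vec n) : indPat (gammaIJ i j) (n - 1) P = collapsePat i j P :=
  Set.image_congr fun S hS => indSet_gammaIJ hi hij hj (hP S hS)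

namespace IsNOP

variable {α : ℕ → Finset ℕ} {t₀ : ℕ}

lemma eq_of_collapse_eq (hα : IsNOP n k α) (ht₀ : t₀ ∈ Icc 1 k) (hij : i < j)
    (hi : i ∈ α t₀) (hj : j ∈ α t₀) {s s' x y : ℕ} (hs : s ∈ Icc 1 k) (hs' : s' ∈ Icc 1 k)
    (hx : x ∈ α s) (hy : y ∈ α s') (hxy : collapse i j x = collapse i j y) : s = s' := by
  by_cases hxi : collapse i j x = i
  · have hyi := hxy ▸ hxi
    rw [collapse_eq_left_iff hij] at hxi hyi
    have hs₀ : s = t₀ := by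
      rcases hxi with rfl | rfl
      exacts [hα.eq_of_mem hs ht₀ hx hi, hα.eq_of_mem hs ht₀ hx hj]
    have hs'₀ : s' = t₀ := by
      rcases hyi with rfl | rfl
      exacts [hα.eq_of_mem hs' ht₀ hy hi, hα.eq_of_mem hs' ht₀ hy hj]
    exact hs₀.trans hs'₀.symm
  · have hxj : x ≠ j := fun h => hxi (h ▸ collapse_right)
    have hyj : y ≠ j := fun h => hxi (hxy ▸ h ▸ collapse_right)
    rw [← skip_collapse hxj, hxy, skip_collapse hyj] at hx
    exact hα.eq_of_mem hs hs' hx hy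

lemma image_collapse (hα : IsNOP n k α) (ht₀ : t₀ ∈ Icc 1 k) (hij : i < j)
    (hi : i ∈ α t₀) (hj : j ∈ α t₀) (hmin : ∀ x ∈ α t₀, i ≤ x) :
    IsNOP (n - 1) k fun s => (α s).image (collapse i j) := by
  have hi1 : 1 ≤ i := (Finset.mem_Icc.1 (hα.subset_Icc ht₀ hi)).1
  have hjn : j ≤ n := (Finset.mem_Icc.1 (hα.subset_Icc ht₀ hj)).2
  refine ⟨fun s hs => (hα.1 s hs).image _, ?_, ?_, ?_⟩
  · intro s hs s' hs' hss'
    simp only [Finset.disjoint_left, Finset.mem_image]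
    rintro _ ⟨x, hx, rfl⟩ ⟨y, hy, hxy⟩
    exact hss' (hα.eq_of_collapse_eq ht₀ hij hi hj hs hs' hx hy hxy.symm)
  · rw [← Finset.biUnion_image, hα.2.2.1]
    exact image_collapse_vec hi1 hij hjn
  · intro s hs s' hs' hss'
    have hne := hα.1 s hs
    set a := (α s).min' hne
    have ha : ∀ b ∈ α s', a < b := fun b hb => WithTop.coe_lt_coe.1 <| by
      rw [Finset.coe_min']
      exact (hα.2.2.2 s hs s' hs' hss').trans_le (Finset.min_le hb)
    have hlt : ∀ b ∈ α s', collapse i j a < collapse i j b := by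
      intro b hb
      refine collapse_lt_collapse (ha b hb) (fun haj => ?_) (fun hbj => ?_)
      · have hs₀ := hα.eq_of_mem hs ht₀ (haj ▸ Finset.min'_mem _ hne) hj
        subst hs₀
        exact absurd (Finset.min'_le _ _ hi) (by omega)
      · have hs'₀ := hα.eq_of_mem hs' ht₀ (hbj ▸ hb) hj
        subst hs'₀
        exact ha i hi
    have hne' := (hα.1 s' hs').image (collapse i j)
    rw [← Finset.coe_min' hne']
    refine (Finset.min_le (Finset.mem_image_of_mem _ (Finset.min'_mem _ hne))).trans_lt ?_
    obtain ⟨b, hb, hbmin⟩ := Finset.mem_image.1 (Finset.min'_mem _ hne')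
    exact WithTop.coe_lt_coe.2 (hbmin ▸ hlt b hb)

lemma indSet_image_collapse (hα : IsNOP n k α) (ht₀ : t₀ ∈ Icc 1 k) (hij : i < j)
    (hi : i ∈ α t₀) (hj : j ∈ α t₀) {S : Finset ℕ} (hS : S ⊆ vec n) :
    indSet (fun s => (α s).image (collapse i j)) k (S.image (collapse i j)) = indSet α k S := by
  ext s
  simp only [indSet, Finset.mem_filter]
  refine and_congr_right fun hs => ⟨?_, ?_⟩
  · rintro ⟨_, hu⟩
    obtain ⟨⟨x, hx, rfl⟩, ⟨y, hyS, hxy⟩⟩ := And.imp Finset.mem_image.1 Finset.mem_image.1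
      (Finset.mem_inter.1 hu)
    obtain ⟨s', hs', hy⟩ := hα.exists_mem (hS hyS)
    obtain rfl := hα.eq_of_collapse_eq ht₀ hij hi hj hs hs' hx hy hxy.symm
    exact ⟨y, Finset.mem_inter.2 ⟨hy, hyS⟩⟩
  · rintro ⟨x, hx⟩
    rw [Finset.mem_inter] at hx
    exact ⟨_, Finset.mem_inter.2 ⟨Finset.mem_image_of_mem _ hx.1, Finset.mem_image_of_mem _ hx.2⟩⟩

lemma exists_collapse (hα : IsNOP n k α) (hkn : k < n) :
    ∃ i j β, 1 ≤ i ∧ i < j ∧ j ≤ n ∧ IsNOP (n - 1) k β ∧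
      ∀ P : Set (Finset ℕ), (∀ S ∈ P, S ⊆ vec n) →
        indPat α k P = indPat β k (collapsePat i j P) := by
  obtain ⟨t₀, ht₀, hcard⟩ := hα.exists_one_lt_card hkn
  have hne := hα.1 t₀ ht₀
  have hi := Finset.min'_mem _ hne
  have hj := Finset.max'_mem _ hne
  have hij := Finset.min'_lt_max'_of_card _ hcard
  refine ⟨_, _, _, (Finset.mem_Icc.1 (hα.subset_Icc ht₀ hi)).1, hij,
    (Finset.mem_Icc.1 (hα.subset_Icc ht₀ hj)).2,
    hα.image_collapse ht₀ hij hi hj fun x hx => Finset.min'_le _ _ hx, fun P hP => ?_⟩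
  rw [indPat, indPat, collapsePat, Set.image_image]
  exact Set.image_congr fun S hS => (hα.indSet_image_collapse ht₀ hij hi hj (hP S hS)).symm

end IsNOP

end Merging

section A1

variable {n q q' : ℕ}

lemma card_vec (n : ℕ) : (vec n).card = n := by simp [vec]

lemma A1Pat_mono (h : q ≤ q') : A1Pat q n ⊆ A1Pat q' n :=
  fun _ ⟨h1, hv, hc⟩ => ⟨h1, hv, hc.trans h⟩

lemma vec_mem_A1Pat (hn : 1 ≤ n) (hq : n ≤ q) : vec n ∈ A1Pat q n :=
  ⟨by simp [vec, hn], subset_rfl, (card_vec n).le.trans hq⟩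

lemma singleton_one_mem_A1Pat (hq : 1 ≤ q) (hn : 1 ≤ n) : {1} ∈ A1Pat q n :=
  ⟨Finset.mem_singleton_self 1, by simp [vec, hn], by simp [hq]⟩

lemma vec_notMem_A1Pat (hq : q < n) : vec n ∉ A1Pat q n :=
  fun h => by have := h.2.2; rw [card_vec] at this; omega

lemma vec_sdiff_singleton_mem_A1Pat {d : ℕ} (hd : d ∈ Icc 2 n) (hq : n - 1 ≤ q) :
    vec n \ {d} ∈ A1Pat q n := by
  simp only [Finset.mem_Icc] at hd
  refine ⟨by simp [vec]; omega, Finset.sdiff_subset, ?_⟩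
  rw [Finset.card_sdiff_of_subset (by simp [vec]; omega), card_vec, Finset.card_singleton]
  omega

lemma isPattern_of_subset_A1Pat {P : Set (Finset ℕ)} (hne : P.Nonempty) (h : P ⊆ A1Pat q n) :
    IsPattern n P :=
  ⟨hne, fun _ hS => ⟨⟨1, (h hS).1⟩, (h hS).2.1⟩⟩

lemma mem_A1Pat_self_cases {T : Finset ℕ} (hT : T ∈ A1Pat n n) :
    T ∈ A1Pat (n - 2) n ∨ (∃ d ∈ Icc 2 n, T = vec n \ {d}) ∨ T = vec n := by
  obtain ⟨h1, hv, hc⟩ := hT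
  rcases (by omega : T.card ≤ n - 2 ∨ T.card = n - 1 ∨ T.card = n) with hc | hc | hc
  · exact .inl ⟨h1, hv, hc⟩
  · have hc1 : (vec n \ T).card = 1 := by
      have hn : 1 ≤ n := by simpa [vec] using hv h1
      rw [Finset.card_sdiff_of_subset hv, card_vec]
      omega
    obtain ⟨d, hd⟩ := Finset.card_eq_one.1 hc1
    have hdT : d ∈ vec n \ T := hd ▸ Finset.mem_singleton_self d
    rw [Finset.mem_sdiff] at hdT
    refine .inr (.inl ⟨d, ?_, ?_⟩)
    · have : d ≠ 1 := fun h => hdT.2 (h ▸ h1)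
      simp only [vec, Finset.mem_Icc] at hdT ⊢
      omega
    · rw [← hd, Finset.sdiff_sdiff_eq_self hv]
  · exact .inr (.inr (Finset.eq_of_subset_of_card_le hv (by rw [card_vec, hc])))

lemma subset_of_forall_sdiff_singleton_mem {P P' : Set (Finset ℕ)} (hup : P ⊆ A1Pat n n)
    (hlow' : A1Pat (n - 2) n ⊆ P') (hcos : ∀ d ∈ Icc 2 n, vec n \ {d} ∈ P → vec n \ {d} ∈ P')
    (hvec : vec n ∈ P → vec n ∈ P') : P ⊆ P' := by
  intro T hT
  rcases mem_A1Pat_self_cases (hup hT) with hT' | ⟨d, hd, rfl⟩ | rfl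
  exacts [hlow' hT', hcos d hd hT, hvec hT]

lemma eq_of_forall_sdiff_singleton_mem_iff {P P' : Set (Finset ℕ)}
    (hlow : A1Pat (n - 2) n ⊆ P) (hup : P ⊆ A1Pat n n)
    (hlow' : A1Pat (n - 2) n ⊆ P') (hup' : P' ⊆ A1Pat n n)
    (hcos : ∀ d ∈ Icc 2 n, vec n \ {d} ∈ P ↔ vec n \ {d} ∈ P')
    (hvec : vec n ∈ P ↔ vec n ∈ P') : P = P' :=
  (subset_of_forall_sdiff_singleton_mem hup hlow' (fun d hd => (hcos d hd).1) hvec.1).antisymm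
    (subset_of_forall_sdiff_singleton_mem hup' hlow (fun d hd => (hcos d hd).2) hvec.2)

variable {i j : ℕ}

lemma image_collapse_mem_A1Pat (hi : 1 ≤ i) (hij : i < j) (hj : j ≤ n) {S : Finset ℕ}
    (hS : S ∈ A1Pat q n) : S.image (collapse i j) ∈ A1Pat q (n - 1) :=
  ⟨one_mem_image_collapse (hi.trans_lt hij) hS.1, image_collapse_subset_vec hi hij hj hS.2.1,
    Finset.card_image_le.trans hS.2.2⟩

lemma image_skip_mem_A1Pat (hj : 2 ≤ j) (hjn : j ≤ n) {T : Finset ℕ}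
    (hT : T ∈ A1Pat q (n - 1)) : T.image (skip j) ∈ A1Pat q n :=
  ⟨Finset.mem_image.2 ⟨1, hT.1, skip_of_lt hj⟩, image_skip_subset_vec (by omega) hjn hT.2.1,
    Finset.card_image_le.trans hT.2.2⟩

lemma collapsePat_A1Pat (hi : 1 ≤ i) (hij : i < j) (hj : j ≤ n) :
    collapsePat i j (A1Pat q n) = A1Pat (min q (n - 1)) (n - 1) := by
  ext T
  constructor
  · rintro ⟨S, hS, rfl⟩
    have hT := image_collapse_mem_A1Pat hi hij hj hS
    have hcard := Finset.card_le_card hT.2.1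
    rw [card_vec] at hcard
    exact ⟨hT.1, hT.2.1, le_min hT.2.2 hcard⟩
  · intro hT
    exact ⟨T.image (skip j), image_skip_mem_A1Pat (by omega) hj (A1Pat_mono (min_le_left _ _) hT),
      image_collapse_image_skip T⟩

end A1

section Heredity

def IsCollapseClosed (b : ℕ) (F : ℕ → Set (Finset ℕ)) : Prop :=
  (∀ n, b ≤ n → IsPattern n (F n)) ∧
    ∀ n i j, b < n → 1 ≤ i → i < j → j ≤ n → collapsePat i j (F n) = F (n - 1)

namespace IsCollapseClosed

variable {b n k : ℕ} {F : ℕ → Set (Finset ℕ)} {C : ℕ → Finset ℕ}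

lemma mono (hF : IsCollapseClosed b F) {c : ℕ} (hbc : b ≤ c) : IsCollapseClosed c F :=
  ⟨fun n hn => hF.1 n (hbc.trans hn), fun n i j hn => hF.2 n i j (by omega)⟩

lemma subset_vec (hF : IsCollapseClosed b F) (hn : b ≤ n) : ∀ S ∈ F n, S ⊆ vec n :=
  fun S hS => ((hF.1 n hn).2 S hS).2

lemma exists_isNOP_indPat_eq (hF : IsCollapseClosed b F) (hkb : k ≤ b) (hbn : b ≤ n)
    (hC : IsNOP n k C) : ∃ C', IsNOP b k C' ∧ indPat C k (F n) = indPat C' k (F b) := by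
  induction n, hbn using Nat.le_induction generalizing C with
  | base => exact ⟨C, hC, rfl⟩
  | succ n hbn ih =>
    obtain ⟨i, j, β, hi, hij, hj, hβ, hcomp⟩ := hC.exists_collapse (by omega)
    rw [hcomp _ (hF.subset_vec (by omega)), hF.2 _ i j (by omega) hi hij hj]
    exact ih hβ

lemma indPat_eq (hF : IsCollapseClosed b F) (hbk : b ≤ k) (hkn : k ≤ n) (hC : IsNOP n k C) :
    indPat C k (F n) = F k := by
  obtain ⟨C', hC', h⟩ := (hF.mono hbk).exists_isNOP_indPat_eq le_rfl hkn hC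
  rw [h, indPat_of_isNOP_self hC' (hF.subset_vec hbk)]

lemma isStable (hF : IsCollapseClosed b F) (hb : IsStable b (b - 1) (F b)) (hbn : b ≤ n) :
    IsStable n n (F n) := by
  intro k h2k hkn α β hα hβ
  rcases lt_or_ge k b with hkb | hbk
  · obtain ⟨α', hα', hαeq⟩ := hF.exists_isNOP_indPat_eq hkb.le hbn hα
    obtain ⟨β', hβ', hβeq⟩ := hF.exists_isNOP_indPat_eq hkb.le hbn hβ
    rw [hαeq, hβeq]
    exact hb k h2k (by omega) α' β' hα' hβ'
  · rw [hF.indPat_eq hbk hkn hα, hF.indPat_eq hbk hkn hβ]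

lemma isHSP (hF : IsCollapseClosed b F) (hb : IsStable b (b - 1) (F b)) : IsHSP b (F b) :=
  ⟨hF.1 b le_rfl, hF.isStable hb le_rfl, fun n hn =>
    ⟨F n, hF.1 n hn.le, hF.isStable hb hn.le, fun _ hγ => hF.indPat_eq le_rfl hn.le hγ⟩⟩

end IsCollapseClosed

end Heredity

section ProjectionToA1

variable {n k : ℕ} {C : ℕ → Finset ℕ} {P : Set (Finset ℕ)}

lemma IsNOP.exists_transversal (hC : IsNOP n k C) {T : Finset ℕ} (hT : T ⊆ Icc 1 k)
    (h1 : 1 ∈ T) : ∃ R ∈ A1Pat T.card n, indSet C k R = T := by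
  have hC1 := hC.one_mem (Finset.mem_Icc.1 (hT h1)).2
  have hrep : ∀ t ∈ Icc 1 k, ∃ x ∈ C t, t = 1 → x = 1 := fun t ht => by
    by_cases h : t = 1
    · exact ⟨1, h ▸ hC1, fun _ => rfl⟩
    · obtain ⟨x, hx⟩ := hC.1 t ht
      exact ⟨x, hx, fun h' => absurd h' h⟩
  choose! r hr hr1 using hrep
  refine ⟨T.image r, ⟨Finset.mem_image.2 ⟨1, h1, hr1 1 (hT h1) rfl⟩, ?_, Finset.card_image_le⟩, ?_⟩
  · simp only [Finset.image_subset_iff]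
    exact fun t ht => hC.subset_Icc (hT ht) (hr t (hT ht))
  · ext u
    rw [indSet, Finset.mem_filter]
    constructor
    · rintro ⟨hu, x, hx⟩
      obtain ⟨hxu, hxT⟩ := Finset.mem_inter.1 hx
      obtain ⟨t, ht, rfl⟩ := Finset.mem_image.1 hxT
      rwa [hC.eq_of_mem hu (hT ht) hxu (hr t (hT ht))]
    · intro hu
      exact ⟨hT hu, r u, Finset.mem_inter.2 ⟨hr u (hT hu), Finset.mem_image_of_mem _ hu⟩⟩

/-- `d` is the largest point of a block with at least two points. -/
lemma IsNOP.exists_sdiff_singleton_meets (hC : IsNOP n k C) (hkn : k < n) :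
    ∃ d ∈ Icc 2 n, ∀ t ∈ Icc 1 k, (C t ∩ (vec n \ {d})).Nonempty := by
  obtain ⟨t₀, ht₀, hcard⟩ := hC.exists_one_lt_card hkn
  have hne := hC.1 t₀ ht₀
  have hlt := Finset.min'_lt_max'_of_card _ hcard
  have hmin := hC.subset_Icc ht₀ (Finset.min'_mem _ hne)
  have hmax := hC.subset_Icc ht₀ (Finset.max'_mem _ hne)
  refine ⟨(C t₀).max' hne, by simp only [Finset.mem_Icc] at hmin hmax ⊢; omega, fun t ht => ?_⟩
  by_cases htt : t = t₀
  · subst htt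
    exact ⟨_, Finset.mem_inter.2 ⟨Finset.min'_mem _ hne,
      Finset.mem_sdiff.2 ⟨hmin, Finset.notMem_singleton.2 hlt.ne⟩⟩⟩
  · obtain ⟨x, hx⟩ := hC.1 t ht
    refine ⟨x, Finset.mem_inter.2 ⟨hx, Finset.mem_sdiff.2 ⟨hC.subset_Icc ht hx, ?_⟩⟩⟩
    rw [Finset.notMem_singleton]
    rintro rfl
    exact htt (hC.eq_of_mem ht ht₀ hx (Finset.max'_mem _ hne))

lemma indPat_eq_A1Pat (hkn : k < n) (hC : IsNOP n k C) (hlow : A1Pat (n - 2) n ⊆ P)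
    (hup : P ⊆ A1Pat n n) (htop : vec n ∈ P ∨ ∀ d ∈ Icc 2 n, vec n \ {d} ∈ P) :
    indPat C k P = A1Pat k k := by
  have hk := hC.one_le (by omega)
  ext T
  constructor
  · rintro ⟨S, hS, rfl⟩
    have hsub : indSet C k S ⊆ vec k := Finset.filter_subset _ _
    refine ⟨Finset.mem_filter.2 ⟨by simp [hk], 1, Finset.mem_inter.2 ⟨hC.one_mem hk, (hup hS).1⟩⟩,
      hsub, ?_⟩
    simpa [card_vec] using Finset.card_le_card hsub
  · rintro ⟨h1T, hTk, -⟩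
    by_cases hsmall : T.card ≤ n - 2
    · obtain ⟨R, hR, hRT⟩ := hC.exists_transversal hTk h1T
      exact ⟨R, hlow (A1Pat_mono hsmall hR), hRT⟩
    · have hT : T = Icc 1 k := by
        refine Finset.eq_of_subset_of_card_le hTk ?_
        simp only [Nat.card_Icc]
        omega
      obtain ⟨S, hS, hmeet⟩ : ∃ S ∈ P, ∀ t ∈ Icc 1 k, (C t ∩ S).Nonempty := by
        rcases htop with hvec | hcos
        · refine ⟨vec n, hvec, fun t ht => ?_⟩
          obtain ⟨x, hx⟩ := hC.1 t ht
          exact ⟨x, Finset.mem_inter.2 ⟨hx, hC.subset_Icc ht hx⟩⟩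
        · obtain ⟨d, hd, hmeet⟩ := hC.exists_sdiff_singleton_meets hkn
          exact ⟨_, hcos d hd, hmeet⟩
      exact ⟨S, hS, hT ▸ Finset.filter_true_of_mem hmeet⟩

lemma isStable_pred_of_A1Pat_subset (hlow : A1Pat (n - 2) n ⊆ P) (hup : P ⊆ A1Pat n n)
    (htop : vec n ∈ P ∨ ∀ d ∈ Icc 2 n, vec n \ {d} ∈ P) : IsStable n (n - 1) P :=
  fun _ _ hk _ _ hα hβ => by
    rw [indPat_eq_A1Pat (by omega) hα hlow hup htop, indPat_eq_A1Pat (by omega) hβ hlow hup htop]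

end ProjectionToA1

section DPattern

variable {i j n h l r s : ℕ}

lemma mem_DPat {T : Finset ℕ} : T ∈ DPat n r s ↔ T ∈ A1Pat (n - r - 1) n ∨
    (∃ h, (1 ≤ h ∧ h ≤ r) ∧ T ∈ HPat n h (s - h + 1)) ∨ T = vec n := by
  simp only [DPat, Set.mem_union, Set.mem_iUnion, Set.mem_singleton_iff, Finset.mem_Icc,
    exists_prop, or_assoc]

lemma vec_mem_DPat : vec n ∈ DPat n r s := Or.inr rfl

lemma eq_vec_of_mem_HPat_zero {S : Finset ℕ} (hS : S ∈ HPat n 0 l) : S = vec n := by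
  obtain ⟨D, hD, -, rfl⟩ := hS
  rw [Finset.card_eq_zero.1 hD, Finset.sdiff_empty]

lemma HPat_eq_empty (hh : 0 < h) (hl : n < l) : HPat n h l = ∅ := by
  refine Set.eq_empty_of_forall_notMem fun S ⟨D, hD, hDsub, _⟩ => ?_
  rw [Finset.Icc_eq_empty (by omega), Finset.subset_empty] at hDsub
  simp [hDsub] at hD
  omega

lemma HPat_subset_A1Pat (hl : 2 ≤ l) (hn : 1 ≤ n) : HPat n h l ⊆ A1Pat (n - h) n := by
  rintro _ ⟨D, rfl, hD, rfl⟩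
  have hDv : D ⊆ vec n := hD.trans (Finset.Icc_subset_Icc (by omega) le_rfl)
  refine ⟨Finset.mem_sdiff.2 ⟨by simp [vec, hn], fun h1 => ?_⟩, Finset.sdiff_subset, ?_⟩
  · have := hD h1
    simp only [Finset.mem_Icc] at this
    omega
  · rw [Finset.card_sdiff_of_subset hDv, card_vec]

lemma DPat_subset_A1Pat (hrs : r < s) (hn : 1 ≤ n) : DPat n r s ⊆ A1Pat n n := by
  intro T hT
  rcases mem_DPat.1 hT with hT | ⟨h, hh, hT⟩ | rfl
  · exact A1Pat_mono (by omega) hT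
  · exact A1Pat_mono (by omega) (HPat_subset_A1Pat (by omega) hn hT)
  · exact vec_mem_A1Pat hn le_rfl

/-- Merging two points removes one hole, unless neither point is a hole. -/
lemma image_collapse_mem_HPat (hi : 1 ≤ i) (hij : i < j) (hj : j ≤ n) {S : Finset ℕ}
    (hS : S ∈ HPat n h l) :
    S.image (collapse i j) ∈ HPat (n - 1) (h - 1) l ∨
      S.image (collapse i j) ∈ HPat (n - 1) h (l - 1) := by
  obtain ⟨D, rfl, hD, rfl⟩ := hS
  by_cases hboth : i ∈ D ∧ j ∈ D
  · left
    have himg : D.image (collapse i j) = (D.erase j).image (collapse i j) := by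
      conv_lhs => rw [← Finset.insert_erase hboth.2]
      rw [Finset.image_insert, collapse_right, Finset.insert_eq_of_mem]
      exact Finset.mem_image.2 ⟨i, Finset.mem_erase.2 ⟨hij.ne, hboth.1⟩, collapse_of_lt hij⟩
    refine ⟨(D.erase j).image (collapse i j), ?_, ?_, ?_⟩
    · rw [Finset.card_image_of_injOn (collapse_injOn hij fun h => Finset.notMem_erase _ _ h.2),
        Finset.card_erase_of_mem hboth.2]
    · simp only [Finset.image_subset_iff, Finset.mem_erase]
      exact fun d ⟨hdj, hd⟩ => collapse_mem_Icc (Finset.mem_Icc.1 (hD hboth.2)).1 hj (hD hd) hdj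
    · rw [image_collapse_sdiff_of_iff hi hij hj (iff_of_true hboth.1 hboth.2), himg]
  by_cases hnone : i ∉ D ∧ j ∉ D
  · right
    refine ⟨D.image (collapse i j), Finset.card_image_of_injOn (collapse_injOn hij hboth), ?_,
      image_collapse_sdiff_of_iff hi hij hj (iff_of_false hnone.1 hnone.2)⟩
    simp only [Finset.image_subset_iff]
    exact fun d hd => collapse_mem_Icc_pred hj (hD hd) fun h => hnone.2 (h ▸ hd)
  · left
    have hlj : l ≤ j := by
      by_cases hiD : i ∈ D
      · exact (Finset.mem_Icc.1 (hD hiD)).1.trans hij.le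
      · exact (Finset.mem_Icc.1 (hD (by tauto))).1
    have hiD : i ∈ D.image (collapse i j) := (mem_image_collapse_left hij).2 (by tauto)
    refine ⟨(D.image (collapse i j)).erase i, ?_, ?_,
      image_collapse_sdiff_of_xor hi hij hj (by tauto)⟩
    · rw [Finset.card_erase_of_mem hiD, Finset.card_image_of_injOn (collapse_injOn hij hboth)]
    · intro u hu
      obtain ⟨hui, hu⟩ := Finset.mem_erase.1 hu
      obtain ⟨d, hd, rfl⟩ := Finset.mem_image.1 hu
      exact collapse_mem_Icc hlj hj (hD hd) fun h => hui (h ▸ collapse_right)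

lemma image_collapse_sdiff_insert_image_skip (hi : 1 ≤ i) (hij : i < j) (hj : j ≤ n)
    (D : Finset ℕ) :
    (vec n \ insert j (D.image (skip j))).image (collapse i j) = vec (n - 1) \ D := by
  have hE : (insert j (D.image (skip j))).image (collapse i j) = insert i D := by
    rw [Finset.image_insert, collapse_right, image_collapse_image_skip]
  have hiE : i ∈ insert j (D.image (skip j)) ↔ i ∈ D := by
    simp [skip_eq_left_iff hij, hij.ne]
  by_cases hiD : i ∈ D
  · rw [image_collapse_sdiff_of_iff hi hij hj
      (iff_of_true (hiE.2 hiD) (Finset.mem_insert_self _ _)), hE, Finset.insert_eq_of_mem hiD]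
  · rw [image_collapse_sdiff_of_xor hi hij hj (iff_of_false (hiE.not.2 hiD) (by simp)), hE,
      Finset.erase_insert hiD]

lemma image_collapse_sdiff_image_skip (hi : 1 ≤ i) (hij : i < j) (hj : j ≤ n) {D : Finset ℕ}
    (hiD : i ∉ D) : (vec n \ D.image (skip j)).image (collapse i j) = vec (n - 1) \ D := by
  rw [image_collapse_sdiff_of_iff hi hij hj (iff_of_false ?_ ?_), image_collapse_image_skip]
  · simpa [skip_eq_left_iff hij] using hiD
  · simp [skip_ne_right]

/-- A hole pattern of `n - 1` points lifts along a merge by adding `j` as a hole (possible when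
`l ≤ j`) or by keeping the holes. -/
lemma exists_image_collapse_eq_of_mem_HPat (hi : 1 ≤ i) (hij : i < j) (hj : j ≤ n)
    {T : Finset ℕ} (hT : T ∈ HPat (n - 1) h l) :
    ∃ S ∈ HPat n (h + 1) l ∪ HPat n h (l + 1), S.image (collapse i j) = T := by
  obtain ⟨D, rfl, hD, rfl⟩ := hT
  have hDb : ∀ u ∈ D, l ≤ u ∧ u ≤ n - 1 := fun u hu => Finset.mem_Icc.1 (hD hu)
  by_cases hlj : l ≤ j
  · refine ⟨_, Or.inl ⟨insert j (D.image (skip j)), ?_, ?_, rfl⟩,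
      image_collapse_sdiff_insert_image_skip hi hij hj D⟩
    · rw [Finset.card_insert_of_notMem (by simp [skip_ne_right]),
        Finset.card_image_of_injective _ (skip_injective j)]
    · rw [Finset.insert_subset_iff, Finset.image_subset_iff]
      refine ⟨Finset.mem_Icc.2 ⟨hlj, hj⟩, fun u hu => ?_⟩
      have := hDb u hu
      rw [Finset.mem_Icc]
      unfold skip; split_ifs <;> omega
  · have hiD : i ∉ D := fun h => by have := hDb i h; omega
    refine ⟨_, Or.inr ⟨D.image (skip j), Finset.card_image_of_injective _ (skip_injective j), ?_,
      rfl⟩, image_collapse_sdiff_image_skip hi hij hj hiD⟩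
    rw [Finset.image_subset_iff]
    intro u hu
    have := hDb u hu
    rw [Finset.mem_Icc]
    unfold skip; split_ifs <;> omega

lemma collapsePat_DPat (hi : 1 ≤ i) (hij : i < j) (hj : j ≤ n) (hr : 1 ≤ r) (hrs : r + 2 ≤ s) :
    collapsePat i j (DPat n r s) = DPat (n - 1) (r - 1) (s - 1) := by
  have hsmall : n - 1 - (r - 1) - 1 = n - r - 1 := by omega
  ext T
  rw [mem_DPat, hsmall]
  constructor
  · rintro ⟨S, hS, rfl⟩
    rcases mem_DPat.1 hS with hS | ⟨h, ⟨hh1, hhr⟩, hS⟩ | rfl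
    · exact .inl (image_collapse_mem_A1Pat hi hij hj hS)
    · rcases image_collapse_mem_HPat hi hij hj hS with hS' | hS'
      · by_cases h1 : h = 1
        · subst h1
          exact .inr (.inr (eq_vec_of_mem_HPat_zero hS'))
        · refine .inr (.inl ⟨h - 1, ⟨by omega, by omega⟩, ?_⟩)
          rwa [show s - 1 - (h - 1) + 1 = s - h + 1 by omega]
      · by_cases hhr' : h = r
        · subst hhr'
          have := HPat_subset_A1Pat (by omega) (by omega) hS'
          exact .inl (by rwa [show n - 1 - h = n - h - 1 by omega] at this)
        · refine .inr (.inl ⟨h, ⟨hh1, by omega⟩, ?_⟩)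
          rwa [show s - 1 - h + 1 = s - h + 1 - 1 by omega]
    · exact .inr (.inr (image_collapse_vec hi hij hj))
  · rintro (hT | ⟨h, ⟨hh1, hhr⟩, hT⟩ | rfl)
    · exact ⟨T.image (skip j), mem_DPat.2 (.inl (image_skip_mem_A1Pat (by omega) hj hT)),
        image_collapse_image_skip T⟩
    · obtain ⟨S, hS, rfl⟩ := exists_image_collapse_eq_of_mem_HPat hi hij hj hT
      refine ⟨S, mem_DPat.2 (.inr (.inl ?_)), rfl⟩
      rcases hS with hS | hS
      · exact ⟨h + 1, ⟨by omega, by omega⟩, by rwa [show s - (h + 1) + 1 = s - 1 - h + 1 by omega]⟩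
      · exact ⟨h, ⟨hh1, by omega⟩, by rwa [show s - h + 1 = s - 1 - h + 1 + 1 by omega]⟩
    · exact ⟨vec n, vec_mem_DPat, image_collapse_vec hi hij hj⟩

lemma A1Pat_subset_DPat_one : A1Pat (n - 2) n ⊆ DPat n 1 l := fun _ hT => mem_DPat.2 (.inl hT)

lemma sdiff_singleton_mem_DPat_one_iff {d : ℕ} (hd : d ∈ Icc 2 n) :
    vec n \ {d} ∈ DPat n 1 l ↔ l ≤ d := by
  have hdv : d ∈ vec n := Finset.Icc_subset_Icc (by omega) le_rfl hd
  simp only [Finset.mem_Icc] at hd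
  rw [mem_DPat]
  constructor
  · rintro (hA | ⟨h, hh, D, hDc, hDsub, hD⟩ | hvec)
    · have := hA.2.2
      rw [Finset.card_sdiff_of_subset (Finset.singleton_subset_iff.2 hdv), card_vec,
        Finset.card_singleton] at this
      omega
    · obtain rfl : h = 1 := by omega
      obtain ⟨e, rfl⟩ := Finset.card_eq_one.1 hDc
      obtain rfl : d = e := by
        by_contra hne
        have : d ∈ vec n \ {e} := Finset.mem_sdiff.2 ⟨hdv, by simpa using hne⟩
        simp [← hD] at this
      have := hDsub (Finset.mem_singleton_self d)
      simp only [Finset.mem_Icc] at this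
      omega
    · have : d ∈ vec n \ {d} := by rw [hvec]; exact hdv
      simp at this
  · intro hl
    refine .inr (.inl ⟨1, ⟨le_rfl, le_rfl⟩, {d}, Finset.card_singleton d, ?_, rfl⟩)
    simp only [Finset.singleton_subset_iff, Finset.mem_Icc]
    omega

lemma DPat_one_two (hn : 1 ≤ n) : DPat n 1 2 = A1Pat n n :=
  eq_of_forall_sdiff_singleton_mem_iff A1Pat_subset_DPat_one (DPat_subset_A1Pat (by norm_num) hn)
    (A1Pat_mono (by omega)) subset_rfl
    (fun d hd => iff_of_true ((sdiff_singleton_mem_DPat_one_iff hd).2 (Finset.mem_Icc.1 hd).1)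
      (vec_sdiff_singleton_mem_A1Pat hd (by omega)))
    (iff_of_true vec_mem_DPat (vec_mem_A1Pat hn le_rfl))

lemma DPat_succ_one_add_two {m : ℕ} :
    DPat (m + 1) 1 (m + 2) = A1Pat (m - 1) (m + 1) ∪ {vec (m + 1)} := by
  have hH : HPat (m + 1) 1 (m + 2) = ∅ := HPat_eq_empty one_pos (by omega)
  simp [DPat, hH]

end DPattern

section Families

variable {m l q : ℕ}

lemma isCollapseClosed_A1Pat (hq : 1 ≤ q) : IsCollapseClosed (q + 1) (A1Pat q) :=
  ⟨fun _ hn => isPattern_of_subset_A1Pat ⟨{1}, singleton_one_mem_A1Pat hq (by omega)⟩ subset_rfl,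
    fun _ _ _ hn hi hij hj => by rw [collapsePat_A1Pat hi hij hj, min_eq_left (by omega)]⟩

lemma isCollapseClosed_A1Pat_self : IsCollapseClosed 1 fun n => A1Pat n n :=
  ⟨fun n hn => isPattern_of_subset_A1Pat ⟨vec n, vec_mem_A1Pat hn le_rfl⟩ subset_rfl,
    fun _ _ _ _ hi hij hj => by
      dsimp only
      rw [collapsePat_A1Pat hi hij hj, min_eq_right (by omega)]⟩

lemma isCollapseClosed_DPat (m : ℕ) (hl : 3 ≤ l) :
    IsCollapseClosed (m + 1) fun n => DPat n (n - m) (l + n - m - 1) :=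
  ⟨fun n hn => isPattern_of_subset_A1Pat ⟨vec n, vec_mem_DPat⟩
      (DPat_subset_A1Pat (by omega) (by omega)),
    fun n _ _ hn hi hij hj => by
      dsimp only
      rw [collapsePat_DPat hi hij hj (by omega) (by omega)]
      congr 1 <;> omega⟩

lemma isHSP_and_indPat_gammaIJ_of_isCollapseClosed {F : ℕ → Set (Finset ℕ)} (hm : 1 ≤ m)
    (hF : IsCollapseClosed (m + 1) F) (hlow : A1Pat (m - 1) (m + 1) ⊆ F (m + 1))
    (hup : F (m + 1) ⊆ A1Pat (m + 1) (m + 1))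
    (htop : vec (m + 1) ∈ F (m + 1) ∨ ∀ d ∈ Icc 2 (m + 1), vec (m + 1) \ {d} ∈ F (m + 1)) :
    IsHSP (m + 1) (F (m + 1)) ∧ indPat (gammaIJ m (m + 1)) m (F (m + 1)) = A1Pat m m :=
  ⟨hF.isHSP (isStable_pred_of_A1Pat_subset hlow hup htop),
    indPat_eq_A1Pat (by omega) (isNOP_gammaIJ hm (by omega) le_rfl) hlow hup htop⟩

lemma isHSP_A1Pat_and_indPat_gammaIJ (hm : 1 ≤ m) :
    IsHSP (m + 1) (A1Pat m (m + 1)) ∧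
      indPat (gammaIJ m (m + 1)) m (A1Pat m (m + 1)) = A1Pat m m :=
  isHSP_and_indPat_gammaIJ_of_isCollapseClosed hm (isCollapseClosed_A1Pat hm)
    (A1Pat_mono (by omega)) (A1Pat_mono (by omega))
    (.inr fun _ hd => vec_sdiff_singleton_mem_A1Pat hd le_rfl)

lemma isHSP_A1Pat_self_and_indPat_gammaIJ (hm : 1 ≤ m) :
    IsHSP (m + 1) (A1Pat (m + 1) (m + 1)) ∧
      indPat (gammaIJ m (m + 1)) m (A1Pat (m + 1) (m + 1)) = A1Pat m m :=
  isHSP_and_indPat_gammaIJ_of_isCollapseClosed (F := fun n => A1Pat n n) hm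
    (isCollapseClosed_A1Pat_self.mono (by omega))
    (A1Pat_mono (by omega)) subset_rfl (.inl (vec_mem_A1Pat (by omega) le_rfl))

lemma isHSP_DPat_one_and_indPat_gammaIJ (hm : 1 ≤ m) (hl : 3 ≤ l) :
    IsHSP (m + 1) (DPat (m + 1) 1 l) ∧
      indPat (gammaIJ m (m + 1)) m (DPat (m + 1) 1 l) = A1Pat m m := by
  have h₀ : DPat (m + 1) (m + 1 - m) (l + (m + 1) - m - 1) = DPat (m + 1) 1 l := by
    congr 1 <;> omega
  rw [← h₀]
  exact isHSP_and_indPat_gammaIJ_of_isCollapseClosed hm (isCollapseClosed_DPat m hl)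
    (h₀ ▸ A1Pat_subset_DPat_one) (h₀ ▸ DPat_subset_A1Pat (by omega) (by omega))
    (.inl vec_mem_DPat)

end Families

section Classification

variable {n : ℕ} {P : Set (Finset ℕ)}

lemma one_mem_of_collapsePat_subset {q k : ℕ} (h : collapsePat 2 3 P ⊆ A1Pat q k)
    {S : Finset ℕ} (hS : S ∈ P) : 1 ∈ S := by
  have h1 := (h ⟨S, hS, rfl⟩).1
  rwa [mem_image_collapse_of_ne (by norm_num) (by norm_num), skip_of_lt (by norm_num)] at h1

/-- A set missing two points `i < j` is the only preimage of its merge along `(i, j)`. -/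
lemma A1Pat_subset_of_subset_collapsePat
    (h : ∀ i j, 1 ≤ i → i < j → j ≤ n → A1Pat (n - 1) (n - 1) ⊆ collapsePat i j P) :
    A1Pat (n - 2) n ⊆ P := by
  intro S hS
  have hcard : 1 < (vec n \ S).card := by
    have := Finset.card_pos.2 ⟨1, hS.1⟩
    rw [Finset.card_sdiff_of_subset hS.2.1, card_vec]
    have := hS.2.2
    omega
  have hne := Finset.card_pos.1 (by omega : 0 < (vec n \ S).card)
  have hij := Finset.min'_lt_max'_of_card _ hcard
  obtain ⟨hiv, hiS⟩ := Finset.mem_sdiff.1 (Finset.min'_mem _ hne)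
  obtain ⟨hjv, hjS⟩ := Finset.mem_sdiff.1 (Finset.max'_mem _ hne)
  have hi : 1 ≤ (vec n \ S).min' hne := (Finset.mem_Icc.1 hiv).1
  have hj : (vec n \ S).max' hne ≤ n := (Finset.mem_Icc.1 hjv).2
  obtain ⟨R, hR, hRS⟩ : S.image (collapse _ _) ∈ collapsePat _ _ P :=
    h _ _ hi hij hj (image_collapse_mem_A1Pat hi hij hj (A1Pat_mono (by omega) hS))
  rwa [eq_of_image_collapse_eq hij hiS hjS hRS] at hR

/-- Without the full set, the merge along `(1, d)` can only reach `vec (n - 1)` from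
`vec n \ {d}`. -/
lemma sdiff_singleton_mem_of_vec_notMem (hup : P ⊆ A1Pat n n)
    (h : ∀ d ∈ Icc 2 n, A1Pat (n - 1) (n - 1) ⊆ collapsePat 1 d P)
    (hvec : vec n ∉ P) {d : ℕ} (hd : d ∈ Icc 2 n) : vec n \ {d} ∈ P := by
  replace hd := Finset.mem_Icc.1 hd
  obtain ⟨R, hR, hRv⟩ := h d (Finset.mem_Icc.2 hd) (vec_mem_A1Pat (by omega) le_rfl)
  have hsub : vec n \ {d} ⊆ R := by
    intro x hx
    obtain ⟨hxv, hxd⟩ := Finset.mem_sdiff.1 hx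
    rw [Finset.mem_singleton] at hxd
    by_cases hx1 : x = 1
    · exact hx1 ▸ (hup hR).1
    · have hcx : collapse 1 d x ≠ 1 := fun h' => by
        rw [collapse_eq_left_iff (by omega)] at h'
        tauto
      have := (collapse_mem_vec_iff le_rfl (by omega) hd.2).2 hxv
      rwa [← hRv, mem_image_collapse_of_ne (by omega) hcx, skip_collapse hxd] at this
  have hdR : d ∉ R := fun hdR => hvec <| by
    have hvR : vec n ⊆ R := fun x hx => if hxd : x = d then hxd ▸ hdR
      else hsub (Finset.mem_sdiff.2 ⟨hx, Finset.notMem_singleton.2 hxd⟩)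
    rwa [← (hup hR).2.1.antisymm hvR]
  have hRd : R = vec n \ {d} := Finset.Subset.antisymm (fun x hx => Finset.mem_sdiff.2
    ⟨(hup hR).2.1 hx, Finset.notMem_singleton.2 fun hxd => hdR (hxd ▸ hx)⟩) hsub
  exact hRd ▸ hR

/-- `vec n \ {d}` lifts uniquely to `vec (n + 1) \ {d, x}`, which merges along `(d, x + 1)`
to `vec n \ {x}`. -/
lemma sdiff_singleton_mem_of_lift {Q : Set (Finset ℕ)}
    (hQ : ∀ i j, 1 ≤ i → i < j → j ≤ n + 1 → collapsePat i j Q = P) {d x : ℕ} (hd : 1 ≤ d)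
    (hdx : d < x) (hx : x ≤ n) (hP : vec n \ {d} ∈ P) : vec n \ {x} ∈ P := by
  have himg₁ : (vec (n + 1) \ {d, x}).image (collapse d x) = vec n \ {d} := by
    rw [image_collapse_sdiff_of_iff hd hdx (by omega) (by simp)]
    simp [collapse_of_lt hdx, collapse_right]
  obtain ⟨R, hR, hRd⟩ := (hQ d x hd hdx (by omega)).symm ▸ hP
  obtain rfl : R = vec (n + 1) \ {d, x} :=
    eq_of_image_collapse_eq hdx (by simp) (by simp) (hRd.trans himg₁.symm)
  have himg₂ : (vec (n + 1) \ {d, x}).image (collapse d (x + 1)) = vec n \ {x} := by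
    rw [image_collapse_sdiff_of_xor (n := n + 1) hd (by omega) (by omega) (by simp; omega)]
    simp [collapse_of_lt (show d < x + 1 by omega), collapse_of_lt (Nat.lt_succ_self x),
      Finset.erase_eq_of_notMem (Finset.notMem_singleton.2 hdx.ne)]
  exact hQ d (x + 1) hd (by omega) (by omega) ▸ ⟨_, hR, himg₂⟩

lemma eq_A1Pat_of_vec_notMem (hn : 1 ≤ n) (hlow : A1Pat (n - 2) n ⊆ P) (hup : P ⊆ A1Pat n n)
    (h : ∀ d ∈ Icc 2 n, A1Pat (n - 1) (n - 1) ⊆ collapsePat 1 d P)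
    (hvec : vec n ∉ P) : P = A1Pat (n - 1) n :=
  eq_of_forall_sdiff_singleton_mem_iff hlow hup (A1Pat_mono (by omega)) (A1Pat_mono (by omega))
    (fun _ hd => iff_of_true (sdiff_singleton_mem_of_vec_notMem hup h hvec hd)
      (vec_sdiff_singleton_mem_A1Pat hd le_rfl))
    (iff_of_false hvec (vec_notMem_A1Pat (by omega)))

lemma exists_eq_DPat_one_of_vec_mem (hlow : A1Pat (n - 2) n ⊆ P) (hup : P ⊆ A1Pat n n)
    (hupward : ∀ d x, 2 ≤ d → d < x → x ≤ n → vec n \ {d} ∈ P → vec n \ {x} ∈ P)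
    (hvec : vec n ∈ P) : ∃ l, 2 ≤ l ∧ l ≤ n + 1 ∧ P = DPat n 1 l := by
  classical
  have hn : 1 ≤ n := by simpa [vec] using (hup hvec).1
  -- `l` is the first hole of a cosingleton in `P`, or `n + 1` if there is none
  have hex : ∃ l, 2 ≤ l ∧ (l = n + 1 ∨ vec n \ {l} ∈ P) := ⟨n + 1, by omega, .inl rfl⟩
  obtain ⟨hl2, hlP⟩ := Nat.find_spec hex
  have hln : Nat.find hex ≤ n + 1 := Nat.find_min' hex ⟨by omega, .inl rfl⟩
  refine ⟨Nat.find hex, hl2, hln, eq_of_forall_sdiff_singleton_mem_iff hlow hup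
    A1Pat_subset_DPat_one (DPat_subset_A1Pat (by omega) hn) (fun d hd => ?_)
    (iff_of_true hvec vec_mem_DPat)⟩
  rw [sdiff_singleton_mem_DPat_one_iff hd]
  simp only [Finset.mem_Icc] at hd
  refine ⟨fun hdP => Nat.find_min' hex ⟨hd.1, .inr hdP⟩, fun hld => ?_⟩
  rcases hlP with hl | hl
  · omega
  · rcases hld.eq_or_lt with heq | hlt
    · exact heq ▸ hl
    · exact hupward _ d hl2 hlt hd.2 hl

theorem eq_A1Pat_or_exists_eq_DPat_one_of_isHSP {m : ℕ} (hm : 2 ≤ m) (hP : IsHSP (m + 1) P)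
    (hπ : indPat (gammaIJ m (m + 1)) m P = A1Pat m m) :
    P = A1Pat m (m + 1) ∨ ∃ l, 2 ≤ l ∧ l ≤ m + 2 ∧ P = DPat (m + 1) 1 l := by
  have hsub : ∀ S ∈ P, S ⊆ vec (m + 1) := fun S hS => (hP.1.2 S hS).2
  have hmerge : ∀ i j, 1 ≤ i → i < j → j ≤ m + 1 → collapsePat i j P = A1Pat m m := by
    intro i j hi hij hj
    rw [← indPat_gammaIJ hi hij hj hsub, ← hπ]
    exact hP.2.1 m hm (by omega) _ _ (isNOP_gammaIJ hi hij hj)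
      (isNOP_gammaIJ (by omega) (by omega) le_rfl)
  have hup : P ⊆ A1Pat (m + 1) (m + 1) := fun S hS =>
    ⟨one_mem_of_collapsePat_subset (hmerge 2 3 (by omega) (by omega) (by omega)).subset hS,
      hsub S hS, by simpa [card_vec] using Finset.card_le_card (hsub S hS)⟩
  have hlow : A1Pat (m - 1) (m + 1) ⊆ P :=
    A1Pat_subset_of_subset_collapsePat fun i j hi hij hj => (hmerge i j hi hij hj).ge
  by_cases hvec : vec (m + 1) ∈ P
  · obtain ⟨Q, hQ, -, hQP⟩ := hP.2.2 (m + 2) (by omega)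
    have hQmerge : ∀ i j, 1 ≤ i → i < j → j ≤ m + 2 → collapsePat i j Q = P := by
      intro i j hi hij hj
      rw [← indPat_gammaIJ hi hij hj fun S hS => (hQ.2 S hS).2]
      exact hQP _ (isNOP_gammaIJ hi hij hj)
    exact .inr (exists_eq_DPat_one_of_vec_mem hlow hup
      (fun _ _ hd hdx hx => sdiff_singleton_mem_of_lift hQmerge (by omega) hdx hx) hvec)
  · refine .inl (eq_A1Pat_of_vec_notMem (by omega) hlow hup (fun d hd => ?_) hvec)
    exact (hmerge 1 d le_rfl (Finset.mem_Icc.1 hd).1 (Finset.mem_Icc.1 hd).2).ge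

end Classification

theorem stmt16 (m : ℕ) (hm : 3 ≤ m) :
    {P : Set (Finset ℕ) | IsHSP (m + 1) P ∧ indPat (gammaIJ m (m + 1)) m P = A1Pat m m} =
      ({A1Pat m (m + 1), A1Pat (m + 1) (m + 1),
        A1Pat (m - 1) (m + 1) ∪ {vec (m + 1)}} : Set (Set (Finset ℕ))) ∪
      {P : Set (Finset ℕ) | ∃ l, 3 ≤ l ∧ l ≤ m + 1 ∧ P = DPat (m + 1) 1 l} := by
  ext P
  simp only [Set.mem_ofPred_eq, Set.mem_union, Set.mem_insert_iff, Set.mem_singleton_iff]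
  constructor
  · rintro ⟨hP, hπ⟩
    rcases eq_A1Pat_or_exists_eq_DPat_one_of_isHSP (by omega) hP hπ with h | ⟨l, hl2, hlm, rfl⟩
    · exact .inl (.inl h)
    · rcases (by omega : l = 2 ∨ l = m + 2 ∨ 3 ≤ l ∧ l ≤ m + 1) with rfl | rfl | hl
      · exact .inl (.inr (.inl (DPat_one_two (by omega))))
      · exact .inl (.inr (.inr DPat_succ_one_add_two))
      · exact .inr ⟨l, hl.1, hl.2, rfl⟩
  · rintro ((rfl | rfl | rfl) | ⟨l, hl3, -, rfl⟩)
    · exact isHSP_A1Pat_and_indPat_gammaIJ (by omega)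
    · exact isHSP_A1Pat_self_and_indPat_gammaIJ (by omega)
    · rw [← DPat_succ_one_add_two]
      exact isHSP_DPat_one_and_indPat_gammaIJ (by omega) (by omega)
    · exact isHSP_DPat_one_and_indPat_gammaIJ (by omega) hl3
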